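/- arXiv:math/9803049 — 6 statements merged into one kernel-verified Lean document; each statement's English description precedes it below -/
import Mathlib

section
/- Let μ : ℝ → ℝ be bounded and continuously differentiable, and suppose there is a constant c ∈ ℝ such that μ'(x) + μ(x)² = c for every x ∈ ℝ. Then c ≥ 0 and there exists k ∈ ℝ with c = k² such that either μ is constant equal to k, or k ≠ 0 and there exists b ∈ ℝ with μ(x) = k·tanh(k·x + b) for all x ∈ ℝ. -/
open Set Filter Real Topology

/-- If `deriv f ≥ δ` on `[0,∞)`, then `f` grows at least linearly. -/
private lemma riccati_lin_growth {f : ℝ → ℝ} (hf : Differentiable ℝ f) {δ : ℝ}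
    (hd : ∀ x, 0 ≤ x → δ ≤ deriv f x) : ∀ x, 0 ≤ x → f 0 + δ * x ≤ f x := by
  intro x hx
  have hder : ∀ y : ℝ, HasDerivAt (fun z => f z - δ * z) (deriv f y - δ) y := by
    intro y
    exact ((hf y).hasDerivAt.sub ((hasDerivAt_id' y).const_mul δ)).congr_deriv (by ring)
  have hmono : MonotoneOn (fun z => f z - δ * z) (Set.Ici (0:ℝ)) := by
    apply monotoneOn_of_deriv_nonneg (convex_Ici 0)
    · exact (hf.continuous.sub (continuous_const.mul continuous_id)).continuousOn
    · intro y _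
      exact ((hder y).differentiableAt).differentiableWithinAt
    · intro y hy
      rw [(hder y).deriv]
      have hy0 : (0:ℝ) < y := by simpa [interior_Ici] using hy
      linarith [hd y hy0.le]
  have := hmono (Set.mem_Ici.mpr le_rfl) (Set.mem_Ici.mpr hx) hx
  simp only at this
  linarith

/-- A bounded differentiable function cannot have derivative bounded below by a
positive constant on `[0,∞)`. -/
private lemma riccati_nonpos_of_bounded {f : ℝ → ℝ} (hf : Differentiable ℝ f) {M δ : ℝ}
    (hM : ∀ x, |f x| ≤ M) (hd : ∀ x, 0 ≤ x → δ ≤ deriv f x) : δ ≤ 0 := by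
  by_contra h
  push_neg at h
  have hM0 : 0 ≤ M := le_trans (abs_nonneg _) (hM 0)
  set x := (2*M + 1)/δ with hxdef
  have hx : 0 ≤ x := div_nonneg (by linarith) h.le
  have h1 := riccati_lin_growth hf hd x hx
  have h2 : δ * x = 2*M+1 := by
    rw [hxdef]; field_simp
  have h3 := abs_le.mp (hM 0)
  have h4 := abs_le.mp (hM x)
  linarith [h3.1, h4.2]

/-- Forward invariance of `{f ≥ a}` when the derivative is strictly positive there. -/
private lemma riccati_invariant {f : ℝ → ℝ} (hf : Differentiable ℝ f) {a : ℝ}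
    (h0 : a ≤ f 0) (hstep : ∀ x, 0 ≤ x → a ≤ f x → 0 < deriv f x) :
    ∀ x, 0 ≤ x → a ≤ f x := by
  intro x1 hx1
  by_contra hcon
  push_neg at hcon
  set S : Set ℝ := Set.Icc 0 x1 ∩ f ⁻¹' (Set.Ici a) with hS
  have hne : S.Nonempty := ⟨0, ⟨le_rfl, hx1⟩, h0⟩
  have hbdd : BddAbove S := ⟨x1, fun y hy => hy.1.2⟩
  have hclosed : IsClosed S :=
    isClosed_Icc.inter (isClosed_Ici.preimage hf.continuous)
  set t := sSup S with ht
  have htS : t ∈ S := hclosed.csSup_mem hne hbdd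
  have hta : a ≤ f t := htS.2
  have htx1 : t < x1 := by
    rcases lt_or_eq_of_le htS.1.2 with h | h
    · exact h
    · exfalso; rw [h] at hta; linarith
  have hpos : 0 < deriv f t := hstep t htS.1.1 hta
  have htend := hasDerivAt_iff_tendsto_slope.1 (hf t).hasDerivAt
  have hev : ∀ᶠ y in 𝓝[≠] t, 0 < slope f t y :=
    htend.eventually (eventually_gt_nhds hpos)
  have hmono : 𝓝[>] t ≤ 𝓝[≠] t :=
    nhdsWithin_mono t (fun y hy => Set.mem_compl_singleton_iff.mpr (ne_of_gt hy))
  have hev' : ∀ᶠ y in 𝓝[>] t, 0 < slope f t y := hev.filter_mono hmono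
  have hIoo : Set.Ioo t x1 ∈ 𝓝[>] t := Ioo_mem_nhdsGT_of_mem ⟨le_rfl, htx1⟩
  obtain ⟨y, hy1, hy2⟩ := (hev'.and (eventually_of_mem hIoo (fun z hz => hz))).exists
  rw [slope_def_field] at hy1
  have hyt : t < y := hy2.1
  have hfy : f t < f y := by
    have hnum : 0 < f y - f t := by
      by_contra hn
      push_neg at hn
      have : (f y - f t) / (y - t) ≤ 0 := div_nonpos_of_nonpos_of_nonneg (by linarith) (by linarith)
      linarith
    linarith
  have hyS : y ∈ S := ⟨⟨le_trans htS.1.1 hyt.le, hy2.2.le⟩, by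
    simp only [Set.mem_preimage, Set.mem_Ici]; linarith⟩
  have := le_csSup hbdd hyS
  rw [← ht] at this
  linarith

/-- A bounded solution of `μ' = c - μ²` with `c = k²`, `k ≥ 0`, satisfies `μ ≤ k`. -/
private lemma riccati_upper {μ : ℝ → ℝ} (hdiff : Differentiable ℝ μ) {M c k : ℝ}
    (hM : ∀ x, |μ x| ≤ M) (hode : ∀ x, deriv μ x = c - μ x ^ 2)
    (hk : 0 ≤ k) (hck : c = k ^ 2) : ∀ x, μ x ≤ k := by
  by_contra hcon
  push_neg at hcon
  obtain ⟨x0, hx0⟩ := hcon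
  set a := μ x0 with ha
  set g : ℝ → ℝ := fun x => μ (x0 - x) with hg
  have hgd : ∀ x, HasDerivAt g (g x ^ 2 - c) x := by
    intro x
    have h1 : HasDerivAt (fun y : ℝ => x0 - y) (-1 : ℝ) x := by
      exact ((hasDerivAt_const x x0).sub (hasDerivAt_id' x)).congr_deriv (by ring)
    have h2 := ((hdiff (x0 - x)).hasDerivAt).comp x h1
    refine HasDerivAt.congr_deriv h2 ?_
    rw [hode]
    simp only [hg]
    ring
  have hgdiff : Differentiable ℝ g := fun x => (hgd x).differentiableAt
  have hgderiv : ∀ x, deriv g x = g x ^ 2 - c := fun x => (hgd x).deriv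
  have ha0 : 0 ≤ a := le_trans hk hx0.le
  have hδ : 0 < a ^ 2 - c := by nlinarith
  have hinv : ∀ x, 0 ≤ x → a ≤ g x := by
    apply riccati_invariant hgdiff
    · simp [hg, ha]
    · intro x hx hax
      rw [hgderiv]
      nlinarith
  have hd : ∀ x, 0 ≤ x → a ^ 2 - c ≤ deriv g x := by
    intro x hx
    rw [hgderiv]
    have h1 := hinv x hx
    nlinarith
  have := riccati_nonpos_of_bounded hgdiff (fun x => hM _) hd
  linarith

/-- Gronwall uniqueness: if a bounded (`|μ| ≤ k`) solution touches `s` with `s² = c`,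
`|s| ≤ k`, then it equals `s` to the right. -/
private lemma riccati_touch {μ : ℝ → ℝ} (hdiff : Differentiable ℝ μ) {c k s : ℝ}
    (hode : ∀ x, deriv μ x = c - μ x ^ 2) (hk : 0 ≤ k) (habs : ∀ x, |μ x| ≤ k)
    (hs : s ^ 2 = c) (hsk : |s| ≤ k) {x0 : ℝ} (h0 : μ x0 = s) :
    ∀ x, x0 ≤ x → μ x = s := by
  intro X hX
  have hcont : ContinuousOn (fun x => μ x - s) (Set.Icc x0 X) :=
    (hdiff.continuous.sub continuous_const).continuousOn
  have hder : ∀ x ∈ Set.Ico x0 X,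
      HasDerivWithinAt (fun x => μ x - s) (deriv μ x) (Set.Ici x) x := by
    intro x _
    exact ((hdiff x).hasDerivAt.sub_const s).hasDerivWithinAt
  have hinit : ‖μ x0 - s‖ ≤ 0 := by rw [h0]; simp
  have hbound : ∀ x ∈ Set.Ico x0 X, ‖deriv μ x‖ ≤ 2*k * ‖μ x - s‖ + 0 := by
    intro x _
    rw [hode x, add_zero]
    have h1 : c - μ x ^ 2 = -((μ x + s) * (μ x - s)) := by rw [← hs]; ring
    rw [h1, norm_neg, norm_mul]
    have h2 : ‖μ x + s‖ ≤ 2 * k := by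
      calc ‖μ x + s‖ ≤ |μ x| + |s| := abs_add_le _ _
        _ ≤ 2 * k := by linarith [habs x]
    exact mul_le_mul_of_nonneg_right h2 (norm_nonneg _)
  have key := norm_le_gronwallBound_of_norm_deriv_right_le hcont hder hinit hbound X
    ⟨hX, le_rfl⟩
  rw [gronwallBound_ε0] at key
  simp only [zero_mul] at key
  have : μ X - s = 0 := by simpa using key
  linarith

private lemma riccati_tanh_exp_form (t : ℝ) :
    Real.tanh t = (Real.exp (2*t) - 1) / (Real.exp (2*t) + 1) := by
  rw [Real.tanh_eq_sinh_div_cosh, Real.sinh_eq, Real.cosh_eq]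
  have h1 : Real.exp (2*t) = Real.exp t * Real.exp t := by
    rw [← Real.exp_add]; ring_nf
  have h3 : Real.exp t ≠ 0 := Real.exp_ne_zero t
  have h5 : (0:ℝ) < Real.exp t + Real.exp (-t) := by positivity
  rw [h1, Real.exp_neg]
  rw [div_div_div_eq]
  field_simp

/-- Classification of bounded global solutions of the Riccati equation
`μ' + μ² = c` on `ℝ`: `c ≥ 0`, and writing `c = k²`, either `μ ≡ k` or
`k ≠ 0` and `μ(x) = k·tanh(k·x + b)` for some `b`. -/
theorem riccati_bounded_classification
    (μ : ℝ → ℝ) (hbdd : ∃ M : ℝ, ∀ x : ℝ, |μ x| ≤ M)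
    (hsmooth : ContDiff ℝ 1 μ) (c : ℝ)
    (hric : ∀ x : ℝ, deriv μ x + (μ x) ^ 2 = c) :
    0 ≤ c ∧ ∃ k : ℝ, c = k ^ 2 ∧
      ((∀ x : ℝ, μ x = k) ∨
        (k ≠ 0 ∧ ∃ b : ℝ, ∀ x : ℝ, μ x = k * Real.tanh (k * x + b))) := by
  obtain ⟨M, hM⟩ := hbdd
  have hdiff : Differentiable ℝ μ := hsmooth.differentiable one_ne_zero
  have hode : ∀ x, deriv μ x = c - μ x ^ 2 := fun x => by linarith [hric x]
  have hc : 0 ≤ c := by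
    have hd : ∀ x, 0 ≤ x → -c ≤ deriv (fun y => -μ y) x := by
      intro x _
      rw [show deriv (fun y => -μ y) x = -deriv μ x from ((hdiff x).hasDerivAt.neg).deriv, hode]
      nlinarith [sq_nonneg (μ x)]
    have := riccati_nonpos_of_bounded hdiff.neg (fun x => by simpa using hM x) hd
    linarith
  set k0 := Real.sqrt c with hk0def
  have hk0 : k0 ^ 2 = c := Real.sq_sqrt hc
  have hk0nn : 0 ≤ k0 := Real.sqrt_nonneg c
  -- the reflected solution ν x = -μ(-x)
  set ν : ℝ → ℝ := fun x => -μ (-x) with hν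
  have hνd : ∀ x, HasDerivAt ν (c - ν x ^ 2) x := by
    intro x
    have h1 : HasDerivAt (fun y : ℝ => -y) (-1 : ℝ) x := by
      exact (hasDerivAt_id' x).neg
    have h2 := (((hdiff (-x)).hasDerivAt).comp x h1).neg
    refine HasDerivAt.congr_deriv h2 ?_
    rw [hode]
    simp only [hν]
    ring
  have hνdiff : Differentiable ℝ ν := fun x => (hνd x).differentiableAt
  have hνode : ∀ x, deriv ν x = c - ν x ^ 2 := fun x => (hνd x).deriv
  have hνM : ∀ x, |ν x| ≤ M := fun x => by simpa [hν] using hM (-x)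
  have hub : ∀ x, μ x ≤ k0 := riccati_upper hdiff hM hode hk0nn hk0.symm
  have hlb : ∀ x, -k0 ≤ μ x := by
    intro x
    have h := riccati_upper hνdiff hνM hνode hk0nn hk0.symm (-x)
    simp only [hν, neg_neg] at h
    linarith
  have habs : ∀ x, |μ x| ≤ k0 := fun x => abs_le.mpr ⟨hlb x, hub x⟩
  have hνabs : ∀ y, |ν y| ≤ k0 := fun y => by
    simpa [hν, abs_neg] using habs (-y)
  by_cases h1 : ∃ x0, μ x0 = k0
  · obtain ⟨x0, hx0⟩ := h1
    refine ⟨hc, k0, hk0.symm, Or.inl ?_⟩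
    intro x
    rcases le_or_gt x0 x with h | h
    · exact riccati_touch hdiff hode hk0nn habs hk0 (le_of_eq (abs_of_nonneg hk0nn)) hx0 x h
    · have hν0 : ν (-x0) = -k0 := by simp [hν, hx0]
      have hs2 : (-k0) ^ 2 = c := by linear_combination hk0
      have hsk : |(-k0)| ≤ k0 := by rw [abs_neg, abs_of_nonneg hk0nn]
      have hx := riccati_touch hνdiff hνode hk0nn hνabs hs2 hsk hν0 (-x) (by linarith)
      simp only [hν, neg_neg] at hx
      linarith
  by_cases h2 : ∃ x0, μ x0 = -k0
  · obtain ⟨x0, hx0⟩ := h2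
    refine ⟨hc, -k0, by linear_combination -hk0, Or.inl ?_⟩
    intro x
    rcases le_or_gt x0 x with h | h
    · have hs2 : (-k0) ^ 2 = c := by linear_combination hk0
      have hsk : |(-k0)| ≤ k0 := by rw [abs_neg, abs_of_nonneg hk0nn]
      exact riccati_touch hdiff hode hk0nn habs hs2 hsk hx0 x h
    · have hν0 : ν (-x0) = k0 := by simp [hν, hx0]
      have hx := riccati_touch hνdiff hνode hk0nn hνabs hk0
        (le_of_eq (abs_of_nonneg hk0nn)) hν0 (-x) (by linarith)
      simp only [hν, neg_neg] at hx
      linarith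
  · push_neg at h1 h2
    have hlt : ∀ x, μ x < k0 := fun x => lt_of_le_of_ne (hub x) (h1 x)
    have hgt : ∀ x, -k0 < μ x := fun x => (hlb x).lt_of_ne (fun he => h2 x he.symm)
    have hk0pos : 0 < k0 := by
      by_contra h
      push_neg at h
      have h0 : k0 = 0 := le_antisymm h hk0nn
      have ha := hlt 0
      have hb := hgt 0
      rw [h0] at ha hb
      linarith
    have hne : ∀ x, k0 - μ x ≠ 0 := fun x => ne_of_gt (by linarith [hlt x])
    set φ : ℝ → ℝ := fun x => (k0 + μ x) / (k0 - μ x) with hφ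
    have hφpos : ∀ x, 0 < φ x := fun x =>
      div_pos (by linarith [hgt x]) (by linarith [hlt x])
    have hφd : ∀ x, HasDerivAt φ (2 * k0 * φ x) x := by
      intro x
      have hnum : HasDerivAt (fun y => k0 + μ y) (deriv μ x) x :=
        ((hdiff x).hasDerivAt).const_add k0
      have hden : HasDerivAt (fun y => k0 - μ y) (-(deriv μ x)) x :=
        ((hdiff x).hasDerivAt).const_sub k0
      have h := hnum.div hden (hne x)
      refine HasDerivAt.congr_deriv h ?_
      rw [hode, ← hk0]
      simp only [hφ]
      field_simp [hne x]
      ring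
    have hconst : ∀ x, φ x * Real.exp (-(2*k0) * x) = φ 0 := by
      intro x
      have hψd : ∀ y, HasDerivAt (fun z => φ z * Real.exp (-(2*k0) * z)) 0 y := by
        intro y
        have he : HasDerivAt (fun z : ℝ => Real.exp (-(2*k0) * z))
            (Real.exp (-(2*k0) * y) * -(2*k0)) y := by
          have hinner : HasDerivAt (fun z : ℝ => -(2*k0) * z) (-(2*k0)) y := by
            simpa using (hasDerivAt_id y).const_mul (-(2*k0))
          exact hinner.exp
        have h := (hφd y).mul he
        refine HasDerivAt.congr_deriv h ?_
        ring
      have hconst' := is_const_of_deriv_eq_zero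
        (f := fun z => φ z * Real.exp (-(2*k0) * z))
        (fun y => ((hψd y).differentiableAt)) (fun y => (hψd y).deriv) x 0
      simpa using hconst'
    refine ⟨hc, k0, hk0.symm, Or.inr ⟨ne_of_gt hk0pos, Real.log (φ 0) / 2, ?_⟩⟩
    intro x
    have hE : Real.exp (2 * (k0 * x + Real.log (φ 0) / 2)) = φ x := by
      have h1 : 2 * (k0 * x + Real.log (φ 0) / 2) = 2 * k0 * x + Real.log (φ 0) := by ring
      rw [h1, Real.exp_add, Real.exp_log (hφpos 0)]
      have h2 := hconst x
      have h3 : Real.exp (2*k0*x) * Real.exp (-(2*k0)*x) = 1 := by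
        rw [← Real.exp_add]
        norm_num
      calc Real.exp (2*k0*x) * φ 0
          = Real.exp (2*k0*x) * (φ x * Real.exp (-(2*k0)*x)) := by rw [h2]
        _ = φ x * (Real.exp (2*k0*x) * Real.exp (-(2*k0)*x)) := by ring
        _ = φ x := by rw [h3, mul_one]
    rw [riccati_tanh_exp_form (k0 * x + Real.log (φ 0) / 2), hE]
    simp only [hφ]
    have e1 : (k0 + μ x)/(k0 - μ x) - 1 = 2*(μ x)/(k0 - μ x) := by
      field_simp [hne x]
      ring
    have e2 : (k0 + μ x)/(k0 - μ x) + 1 = 2*k0/(k0 - μ x) := by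
      field_simp [hne x]
      ring
    rw [e1, e2]
    rw [div_div_div_cancel_right₀]
    · field_simp
    · exact hne x
end

section
/- Let μ : ℝ → ℝ be bounded and twice continuously differentiable, and define ψ : ℝ → ℝ by ψ(x) := exp(∫₀ˣ μ(u) du). Then the following are equivalent: (i) there exists λ ∈ ℝ such that (1/2)·ψ''(x) = λ·ψ(x) for all x ∈ ℝ; (ii) there exists k ∈ ℝ such that either μ(x) = k for all x, or there exists b ∈ ℝ with μ(x) = k·tanh(k·x + b) for all x. Moreover, in that case λ = k²/2. -/
private lemma tanh_hasDerivAt' (t : ℝ) : HasDerivAt Real.tanh (1 - Real.tanh t ^ 2) t := by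
  have h := (Real.hasDerivAt_sinh t).fun_div (Real.hasDerivAt_cosh t)
    (ne_of_gt (Real.cosh_pos t))
  have he : Real.tanh = fun s => Real.sinh s / Real.cosh s :=
    funext fun s => Real.tanh_eq_sinh_div_cosh s
  rw [he]
  refine h.congr_deriv ?_
  have hc := Real.cosh_pos t
  have hsq := Real.cosh_sq_sub_sinh_sq t
  field_simp

private lemma no_pos_concave' (f : ℝ → ℝ) (hf : Differentiable ℝ f)
    (hf' : ∀ x, deriv (deriv f) x < 0) (hpos : ∀ x, 0 < f x) : False := by
  have hanti : StrictAnti (deriv f) := strictAnti_of_deriv_neg hf'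
  have hD : ∀ (c x : ℝ), HasDerivAt (fun y => f y - c * y) (deriv f x - c) x := fun c x =>
    (hf x).hasDerivAt.sub (by simpa using (hasDerivAt_id x).const_mul c)
  rcases le_or_gt (deriv f 0) 0 with ha | ha
  · set c := deriv f 1 with hc
    have hb : c < 0 := lt_of_lt_of_le (hanti zero_lt_one) ha
    have hmono : AntitoneOn (fun x => f x - c * x) (Set.Ici (1:ℝ)) := by
      apply antitoneOn_of_deriv_nonpos (convex_Ici _)
      · exact (hf.continuous.sub (continuous_const.mul continuous_id)).continuousOn
      · intro x _
        exact ((hD c x).differentiableAt).differentiableWithinAt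
      · intro x hx
        rw [interior_Ici] at hx
        rw [(hD c x).deriv]
        have : deriv f x < c := hanti hx
        linarith
    set X := 1 + f 1 / (-c) + 1 with hX
    have hX1 : (1:ℝ) ≤ X := by
      have : 0 ≤ f 1 / (-c) := le_of_lt (div_pos (hpos 1) (by linarith))
      rw [hX]; linarith
    have h2 := hmono (Set.mem_Ici.mpr le_rfl) (Set.mem_Ici.mpr hX1) hX1
    have hcne : c ≠ 0 := ne_of_lt hb
    have hcx : c * X = 2 * c - f 1 := by
      rw [hX, div_neg]; field_simp; ring
    have := hpos X
    simp only [hX] at h2 hcx this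
    linarith
  · set c := deriv f 0 with hc
    have hmono : MonotoneOn (fun x => f x - c * x) (Set.Iic (0:ℝ)) := by
      apply monotoneOn_of_deriv_nonneg (convex_Iic _)
      · exact (hf.continuous.sub (continuous_const.mul continuous_id)).continuousOn
      · intro x _
        exact ((hD c x).differentiableAt).differentiableWithinAt
      · intro x hx
        rw [interior_Iic] at hx
        rw [(hD c x).deriv]
        have : c < deriv f x := hanti hx
        linarith
    set X := -(f 0 / c) - 1 with hX
    have hX1 : X ≤ (0:ℝ) := by
      have : 0 ≤ f 0 / c := le_of_lt (div_pos (hpos 0) ha)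
      rw [hX]; linarith
    have h2 := hmono (Set.mem_Iic.mpr hX1) (Set.mem_Iic.mpr le_rfl) hX1
    have hcne : c ≠ 0 := ne_of_gt ha
    have hcx : c * X = -(f 0) - c := by
      rw [hX]; field_simp
    have := hpos X
    simp only [hX] at h2 hcx this
    linarith

/-- Let `μ : ℝ → ℝ` be bounded and twice continuously differentiable, and let
`ψ(x) = exp(∫₀ˣ μ)`.  Then `ψ` satisfies `(1/2)ψ'' = λψ` for some `λ` iff
`μ` is constant `k` or `μ(x) = k·tanh(kx+b)`; and in that case `λ = k²/2`. -/
theorem eigenfunction_iff_tanh_drift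
    (μ : ℝ → ℝ) (hbdd : ∃ M : ℝ, ∀ x : ℝ, |μ x| ≤ M)
    (hsmooth : ContDiff ℝ 2 μ)
    (ψ : ℝ → ℝ) (hψ : ∀ x : ℝ, ψ x = Real.exp (∫ u in (0:ℝ)..x, μ u)) :
    ((∃ l : ℝ, ∀ x : ℝ, (1 / 2) * deriv (deriv ψ) x = l * ψ x) ↔
      (∃ k : ℝ, (∀ x : ℝ, μ x = k) ∨
        ∃ b : ℝ, ∀ x : ℝ, μ x = k * Real.tanh (k * x + b))) ∧
    (∀ l k : ℝ,
      (∀ x : ℝ, (1 / 2) * deriv (deriv ψ) x = l * ψ x) →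
      ((∀ x : ℝ, μ x = k) ∨ ∃ b : ℝ, ∀ x : ℝ, μ x = k * Real.tanh (k * x + b)) →
      l = k ^ 2 / 2) := by
  have hμcont : Continuous μ := hsmooth.continuous
  have hμdiff : Differentiable ℝ μ := hsmooth.differentiable (by norm_num)
  have hψpos : ∀ x, 0 < ψ x := fun x => by rw [hψ x]; exact Real.exp_pos _
  have hψ0 : ψ 0 = 1 := by rw [hψ 0, intervalIntegral.integral_same, Real.exp_zero]
  have hψd : ∀ x, HasDerivAt ψ (μ x * ψ x) x := by
    intro x
    have hI : HasDerivAt (fun y => ∫ u in (0:ℝ)..y, μ u) (μ x) x :=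
      intervalIntegral.integral_hasDerivAt_right (hμcont.intervalIntegrable _ _)
        hμcont.aestronglyMeasurable.stronglyMeasurableAtFilter hμcont.continuousAt
    have h2 := (Real.hasDerivAt_exp (∫ u in (0:ℝ)..x, μ u)).comp x hI
    have h3 : HasDerivAt (fun y => Real.exp (∫ u in (0:ℝ)..y, μ u)) (μ x * ψ x) x := by
      rw [hψ x, mul_comm]; exact h2
    exact h3.congr_of_eventuallyEq (Filter.Eventually.of_forall hψ)
  have hψdiff : Differentiable ℝ ψ := fun x => (hψd x).differentiableAt
  have hd1 : deriv ψ = fun x => μ x * ψ x := funext fun x => (hψd x).deriv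
  have hψdd : ∀ x, HasDerivAt (deriv ψ) ((deriv μ x + μ x ^ 2) * ψ x) x := by
    intro x
    have h := ((hμdiff x).hasDerivAt).fun_mul (hψd x)
    rw [hd1]
    refine h.congr_deriv ?_
    ring
  have hdd : ∀ x, deriv (deriv ψ) x = (deriv μ x + μ x ^ 2) * ψ x := fun x => (hψdd x).deriv
  have hkey : ∀ k : ℝ, ((∀ x, μ x = k) ∨ ∃ b, ∀ x, μ x = k * Real.tanh (k * x + b)) →
      ∀ x, deriv μ x + μ x ^ 2 = k ^ 2 := by
    rintro k (h | ⟨b, h⟩) x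
    · have hμe : μ = fun _ => k := funext h
      rw [hμe]; simp
    · have hμe : μ = fun x => k * Real.tanh (k * x + b) := funext h
      rw [hμe]
      have hin : HasDerivAt (fun x : ℝ => k * x + b) k x := by
        simpa using ((hasDerivAt_id x).const_mul k).add_const b
      have ht : HasDerivAt (fun x : ℝ => k * Real.tanh (k * x + b))
          (k * ((1 - Real.tanh (k * x + b) ^ 2) * k)) x := by
        have := ((tanh_hasDerivAt' (k * x + b)).comp x hin).const_mul k
        exact this
      rw [ht.deriv]
      ring
  constructor
  · constructor
    · -- forward direction
      rintro ⟨l, hl⟩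
      have heq : ∀ x, deriv (deriv ψ) x = 2 * l * ψ x := fun x => by
        have := hl x; linarith
      rcases lt_or_ge l 0 with hlneg | hlnn
      · exfalso
        apply no_pos_concave' ψ hψdiff _ hψpos
        intro x
        rw [heq x]
        have := hψpos x
        nlinarith
      · set k := Real.sqrt (2 * l) with hkdef
        have hk2 : k ^ 2 = 2 * l := Real.sq_sqrt (by linarith)
        have hk0 : 0 ≤ k := Real.sqrt_nonneg _
        set u : ℝ → ℝ := fun x => deriv ψ x - k * ψ x with hu
        set v : ℝ → ℝ := fun x => deriv ψ x + k * ψ x with hv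
        have hψdd' : ∀ x, HasDerivAt (deriv ψ) (2 * l * ψ x) x := by
          intro x
          have h1 := hψdd x
          rwa [show (deriv μ x + μ x ^ 2) * ψ x = 2 * l * ψ x by rw [← hdd x, heq x]] at h1
        have hud : ∀ x, HasDerivAt u (-k * u x) x := by
          intro x
          have h2 := (hψdd' x).sub ((hψd x).const_mul k)
          refine h2.congr_deriv ?_
          simp only [hu]
          rw [hd1]
          simp only []
          rw [← hk2]
          ring
        have hvd : ∀ x, HasDerivAt v (k * v x) x := by
          intro x
          have h2 := (hψdd' x).add ((hψd x).const_mul k)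
          refine h2.congr_deriv ?_
          simp only [hv]
          rw [hd1]
          simp only []
          rw [← hk2]
          ring
        have hexp : ∀ (c x : ℝ), HasDerivAt (fun y : ℝ => Real.exp (c * y))
            (c * Real.exp (c * x)) x := by
          intro c x
          have hin : HasDerivAt (fun y : ℝ => c * y) c x := by
            simpa using (hasDerivAt_id x).const_mul c
          exact ((Real.hasDerivAt_exp (c * x)).comp x hin).congr_deriv (mul_comm _ _)
        have hU : ∀ x, u x * Real.exp (k * x) = u 0 := by
          have hcd : ∀ x, HasDerivAt (fun y => u y * Real.exp (k * y)) 0 x := by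
            intro x
            have h := (hud x).fun_mul (hexp k x)
            refine h.congr_deriv ?_
            ring
          intro x
          have hconst := is_const_of_deriv_eq_zero
            (fun y => (hcd y).differentiableAt) (fun y => (hcd y).deriv) x 0
          simpa using hconst
        have hV : ∀ x, v x * Real.exp (-k * x) = v 0 := by
          have hcd : ∀ x, HasDerivAt (fun y => v y * Real.exp (-k * y)) 0 x := by
            intro x
            have h := (hvd x).fun_mul (hexp (-k) x)
            refine h.congr_deriv ?_
            ring
          intro x
          have hconst := is_const_of_deriv_eq_zero
            (fun y => (hcd y).differentiableAt) (fun y => (hcd y).deriv) x 0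
          simpa using hconst
        have hdψ0 : deriv ψ 0 = μ 0 := by
          rw [hd1]; simp [hψ0]
        rcases eq_or_lt_of_le hk0 with hk | hk
        · -- k = 0 case
          have hc1 : ∀ x, deriv ψ x = μ 0 := by
            intro x
            have h := hU x
            simp only [hu, ← hk, zero_mul, sub_zero, Real.exp_zero, mul_one] at h
            rw [h, hdψ0]
          have haff : ∀ x, ψ x = 1 + μ 0 * x := by
            have hgd : ∀ x, HasDerivAt (fun y => ψ y - μ 0 * y) 0 x := by
              intro x
              have h := (hψd x).sub
                (by simpa using (hasDerivAt_id x).const_mul (μ 0) :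
                  HasDerivAt (fun y : ℝ => μ 0 * y) (μ 0) x)
              have hdx : μ x * ψ x = μ 0 := by
                rw [← (hψd x).deriv]; exact hc1 x
              rwa [hdx, sub_self] at h
            intro x
            have h := is_const_of_deriv_eq_zero
              (fun y => (hgd y).differentiableAt) (fun y => (hgd y).deriv) x 0
            simp only [mul_zero, sub_zero, hψ0] at h
            linarith
          have hμ00 : μ 0 = 0 := by
            by_contra hne
            have h1 := hψpos (-(2 / μ 0))
            rw [haff (-(2 / μ 0)),
              show μ 0 * -(2 / μ 0) = -2 by field_simp] at h1
            linarith
          refine ⟨0, Or.inl fun x => ?_⟩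
          have h := hc1 x
          rw [hμ00, (hψd x).deriv] at h
          rcases mul_eq_zero.mp h with h' | h'
          · exact h'
          · exact absurd h' (ne_of_gt (hψpos x))
        · -- k > 0 case
          have hvu : ∀ x, v x - u x = 2 * k * ψ x := fun x => by
            simp only [hu, hv]; ring
          have hsum : ∀ x, v x + u x = 2 * (μ x * ψ x) := fun x => by
            simp only [hu, hv, (hψd x).deriv]; rw [← (hψd x).deriv]; ring
          have hux : ∀ x, u x = u 0 * Real.exp (-k * x) := by
            intro x
            rw [← hU x, show -k * x = -(k * x) by ring, Real.exp_neg, mul_assoc,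
              mul_inv_cancel₀ (Real.exp_pos _).ne', mul_one]
          have hvx : ∀ x, v x = v 0 * Real.exp (k * x) := by
            intro x
            rw [← hV x, show -k * x = -(k * x) by ring, Real.exp_neg, mul_assoc,
              inv_mul_cancel₀ (Real.exp_pos _).ne', mul_one]
          have h2k : v 0 - u 0 = 2 * k := by
            have := hvu 0; rw [hψ0] at this; linarith
          have hno : ∀ x, v 0 * Real.exp (k * x) ≠ u 0 * Real.exp (-k * x) := by
            intro x hE
            have h := hvu x
            rw [hvx x, hux x, hE] at h
            nlinarith [mul_pos hk (hψpos x)]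
          have hsame : ¬ 0 < u 0 * v 0 := by
            intro hprod
            have hv0ne : v 0 ≠ 0 := by
              rintro h0; rw [h0, mul_zero] at hprod; exact lt_irrefl _ hprod
            have hratio : 0 < u 0 / v 0 := by
              rcases mul_pos_iff.mp hprod with ⟨h1', h2'⟩ | ⟨h1', h2'⟩
              · exact div_pos h1' h2'
              · exact div_pos_of_neg_of_neg h1' h2'
            set x := Real.log (u 0 / v 0) / (2 * k) with hxdef
            apply hno x
            have h2kne : (2 * k) ≠ 0 := ne_of_gt (by linarith)
            have hek : Real.exp (2 * k * x) = u 0 / v 0 := by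
              rw [hxdef, mul_div_assoc', mul_div_cancel_left₀ _ h2kne]
              exact Real.exp_log hratio
            have hsq : Real.exp (k * x) * Real.exp (k * x) = u 0 / v 0 := by
              rw [← Real.exp_add, show k * x + k * x = 2 * k * x by ring, hek]
            rw [show -k * x = -(k * x) by ring, Real.exp_neg]
            rw [mul_comm (u 0), ← div_eq_inv_mul, eq_div_iff (Real.exp_pos (k * x)).ne']
            rw [mul_assoc, hsq, mul_comm (v 0)]
            exact div_mul_cancel₀ _ hv0ne
          have hu0 : u 0 ≤ 0 := by
            by_contra hc
            push_neg at hc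
            have hv0 : 0 < v 0 := by linarith
            exact hsame (mul_pos hc hv0)
          have hv0 : 0 ≤ v 0 := by
            by_contra hc
            push_neg at hc
            have hu0' : u 0 < 0 := by linarith
            exact hsame (mul_pos_of_neg_of_neg hu0' hc)
          rcases hu0.lt_or_eq with hu0lt | hu0eq
          · rcases hv0.lt_or_eq with hv0lt | hv0eq
            · -- tanh case : u 0 < 0 < v 0
              set b := Real.log (v 0 / (-u 0)) / 2 with hbdef
              refine ⟨k, Or.inr ⟨b, fun x => ?_⟩⟩
              set A := Real.exp (k * x) with hA
              have hA0 : 0 < A := Real.exp_pos _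
              set s := Real.exp b with hs
              have hs0 : 0 < s := Real.exp_pos _
              have hs2 : s ^ 2 = v 0 / (-u 0) := by
                rw [hs, sq, ← Real.exp_add, hbdef,
                  show Real.log (v 0 / (-u 0)) / 2 + Real.log (v 0 / (-u 0)) / 2
                    = Real.log (v 0 / (-u 0)) by ring]
                exact Real.exp_log (div_pos hv0lt (by linarith))
              have hu0ne : u 0 ≠ 0 := ne_of_lt hu0lt
              have hv0u : v 0 = -u 0 * s ^ 2 := by
                rw [hs2]
                field_simp
              have htanh : Real.tanh (k * x + b)
                  = (A * s - (A * s)⁻¹) / (A * s + (A * s)⁻¹) := by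
                rw [Real.tanh_eq_sinh_div_cosh, Real.sinh_eq, Real.cosh_eq,
                  Real.exp_neg, Real.exp_add, ← hA, ← hs]
                rw [div_div_div_cancel_right₀ (by norm_num : (2:ℝ) ≠ 0)]
              have h1 := hvu x
              have h2 := hsum x
              rw [hvx x, hux x, show -k * x = -(k * x) by ring, Real.exp_neg, ← hA] at h1 h2
              have hden : (0:ℝ) < 2 * k * ψ x := mul_pos (by linarith) (hψpos x)
              have key : 2 * (μ x * ψ x) * k
                  = (k * Real.tanh (k * x + b)) * (2 * k * ψ x) := by
                rw [← h2, ← h1, htanh, hv0u]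
                have hAs : A * s + (A * s)⁻¹ ≠ 0 := by positivity
                field_simp
                ring
              have hfin : μ x * (2 * k * ψ x)
                  = (k * Real.tanh (k * x + b)) * (2 * k * ψ x) := by
                rw [show μ x * (2 * k * ψ x) = 2 * (μ x * ψ x) * k by ring]
                exact key
              exact mul_right_cancel₀ (ne_of_gt hden) hfin
            · -- v 0 = 0 : μ = -k
              refine ⟨-k, Or.inl fun x => ?_⟩
              have hvx0 : v x = 0 := by rw [hvx x, ← hv0eq, zero_mul]
              have h0 : deriv ψ x + k * ψ x = 0 := by
                simpa [hv] using hvx0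
              have hdx : deriv ψ x = μ x * ψ x := (hψd x).deriv
              have h1 : (μ x + k) * ψ x = 0 := by linear_combination h0 - hdx
              rcases mul_eq_zero.mp h1 with h' | h'
              · linarith
              · exact absurd h' (ne_of_gt (hψpos x))
          · -- u 0 = 0 : μ = k
            refine ⟨k, Or.inl fun x => ?_⟩
            have hux0 : u x = 0 := by rw [hux x, hu0eq, zero_mul]
            have h0 : deriv ψ x - k * ψ x = 0 := by
              simpa [hu] using hux0
            have hdx : deriv ψ x = μ x * ψ x := (hψd x).deriv
            have h1 : (μ x - k) * ψ x = 0 := by linear_combination h0 - hdx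
            rcases mul_eq_zero.mp h1 with h' | h'
            · linarith
            · exact absurd h' (ne_of_gt (hψpos x))
    · -- backward direction
      rintro ⟨k, hform⟩
      refine ⟨k ^ 2 / 2, fun x => ?_⟩
      rw [hdd x, hkey k hform x]
      ring
  · -- the eigenvalue identity
    intro l k hl hform
    have h0 := hl 0
    rw [hdd 0, hψ0, hkey k hform 0] at h0
    linarith
end

section
/- Let E be a nonempty set and let r : (0,∞) × E × E → (0,∞) satisfy the cocycle identity r(t+s, x, y) = r(t, x, z) · r(s, z, y) for all s, t > 0 and all x, y, z ∈ E. Assume there exists x₀ ∈ E such that the function t ↦ r(t, x₀, x₀) is Lebesgue measurable on (0,∞). Then there exist λ ∈ ℝ and a function ψ : E → (0,∞) such that r(t, x, y) = exp(λ·t) · ψ(y)/ψ(x) for all t > 0 and all x, y ∈ E. -/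
open MeasureTheory Pointwise

theorem additive_measurable_linear (g : ℝ → ℝ) (hg : Measurable g)
    (hadd : ∀ s t : ℝ, g (s + t) = g s + g t) : ∀ t, g t = g 1 * t := by
  set G : ℝ →+ ℝ := AddMonoidHom.mk' g (fun a b => hadd a b) with hG
  have hGg : ∀ t, G t = g t := fun t => rfl
  -- find n with positive measure where |g| ≤ n on [0,1]
  set A : ℕ → Set ℝ := fun n => Set.Icc (0:ℝ) 1 ∩ {x | |g x| ≤ n} with hA
  have hAmeas : ∀ n, MeasurableSet (A n) := fun n =>
    measurableSet_Icc.inter (measurableSet_le hg.abs measurable_const)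
  have hcover : Set.Icc (0:ℝ) 1 ⊆ ⋃ n, A n := by
    intro x hx
    obtain ⟨n, hn⟩ := exists_nat_ge (|g x|)
    exact Set.mem_iUnion.2 ⟨n, hx, hn⟩
  have hex : ∃ n, 0 < volume (A n) := by
    by_contra h
    push_neg at h
    have h0 : volume (⋃ n, A n) = 0 :=
      measure_iUnion_null (F := Measure ℝ) (μ := (volume : Measure ℝ)) fun n => le_antisymm (h n) zero_le
    have : volume (Set.Icc (0:ℝ) 1) ≤ volume (⋃ n, A n) := measure_mono hcover
    rw [h0, Real.volume_Icc] at this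
    simp at this
  obtain ⟨n, hn⟩ := hex
  have hsub : A n - A n ∈ nhds (0:ℝ) :=
    MeasureTheory.Measure.sub_mem_nhds_zero_of_addHaar_pos volume (A n) (hAmeas n) hn
  obtain ⟨δ, hδ, hball⟩ := Metric.mem_nhds_iff.1 hsub
  have hbound : ∀ x : ℝ, |x| < δ → |g x| ≤ 2 * n := by
    intro x hx
    have hxmem : x ∈ A n - A n := hball (by simpa [Real.dist_eq] using hx)
    obtain ⟨a, ha, b, hb, hab⟩ := Set.mem_sub.1 hxmem
    have : g x = g a - g b := by
      rw [← hab, ← hGg, ← hGg, ← hGg, map_sub]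
    rw [this]
    calc |g a - g b| ≤ |g a| + |g b| := abs_sub _ _
      _ ≤ (n:ℝ) + n := add_le_add ha.2 hb.2
      _ = 2 * n := by ring
  have hg0 : g 0 = 0 := by
    have := hadd 0 0
    simp at this; linarith
  -- continuity at 0
  have hcont0 : ContinuousAt g 0 := by
    rw [Metric.continuousAt_iff]
    intro ε hε
    obtain ⟨m, hm⟩ := exists_nat_gt (2 * n / ε)
    have hm0 : (0:ℝ) < m := lt_of_le_of_lt (div_nonneg (by positivity) hε.le) hm
    refine ⟨δ / m, by positivity, ?_⟩
    intro y hy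
    rw [Real.dist_eq, sub_zero] at hy
    have hmy : |(m : ℝ) * y| < δ := by
      rw [abs_mul, abs_of_nonneg hm0.le]
      calc (m:ℝ) * |y| < m * (δ / m) := by
            exact mul_lt_mul_of_pos_left hy hm0
        _ = δ := by field_simp
    have h1 : g ((m:ℝ) * y) = m * g y := by
      have := map_nsmul G m y
      simpa [hGg, nsmul_eq_mul] using this
    have h2 : |g ((m:ℝ) * y)| ≤ 2 * n := hbound _ hmy
    rw [h1, abs_mul, abs_of_nonneg hm0.le] at h2
    rw [Real.dist_eq, hg0, sub_zero]
    calc |g y| = m * |g y| / m := by field_simp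
      _ ≤ 2 * n / m := by gcongr
      _ < ε := by
          rw [div_lt_iff₀ hm0]
          have : 2 * (n:ℝ) / ε * ε < (m:ℝ) * ε := mul_lt_mul_of_pos_right hm hε
          rw [div_mul_cancel₀] at this
          · linarith [this]
          · exact hε.ne'
  -- continuity everywhere
  have hcont : Continuous g := by
    rw [continuous_iff_continuousAt]
    intro x₀
    have heq : g = fun x => g x₀ + g (x - x₀) := by
      funext x
      rw [← hadd, add_sub_cancel]
    rw [heq]
    have h1 : ContinuousAt (fun x : ℝ => x - x₀) x₀ := by fun_prop
    have h2 : ContinuousAt (fun x : ℝ => g (x - x₀)) x₀ := by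
      have h1' : ContinuousAt (fun x : ℝ => x - x₀) x₀ := h1
      have h0 : ContinuousAt g ((fun x : ℝ => x - x₀) x₀) := by simpa using hcont0
      exact ContinuousAt.comp (f := fun x : ℝ => x - x₀) h0 h1'
    exact continuousAt_const.add h2
  intro t
  have := map_real_smul G hcont t 1
  simpa [hGg, smul_eq_mul, mul_comm] using this



/-- A strictly positive multiplicative cocycle `r(t+s,x,y) = r(t,x,z)·r(s,z,y)`
(for all intermediate points `z`), measurable in `t` at one diagonal point,
factors as `r(t,x,y) = e^{λt} ψ(y)/ψ(x)`. -/
theorem cocycle_factorization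
    {E : Type*} [Nonempty E] (r : ℝ → E → E → ℝ)
    (hrpos : ∀ t : ℝ, 0 < t → ∀ x y : E, 0 < r t x y)
    (hcocycle : ∀ s t : ℝ, 0 < s → 0 < t → ∀ x y z : E,
      r (t + s) x y = r t x z * r s z y)
    (hmeas : ∃ x₀ : E, Measurable fun t : Set.Ioi (0:ℝ) => r t x₀ x₀) :
    ∃ (l : ℝ) (ψ : E → ℝ), (∀ x : E, 0 < ψ x) ∧
      ∀ t : ℝ, 0 < t → ∀ x y : E, r t x y = Real.exp (l * t) * ψ y / ψ x := by
  classical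
  obtain ⟨x₀, hx₀⟩ := hmeas
  set F : Set.Ioi (0:ℝ) → ℝ := fun t => Real.log (r t x₀ x₀) with hF
  have hFmeas : Measurable F := Real.measurable_log.comp hx₀
  set L : ℝ → ℝ := fun t => if h : t ∈ Set.Ioi (0:ℝ) then F ⟨t, h⟩ else 0 with hL
  have hLmeas : Measurable L :=
    Measurable.dite hFmeas measurable_const measurableSet_Ioi
  have hLval : ∀ t : ℝ, 0 < t → L t = Real.log (r t x₀ x₀) := fun t ht => dif_pos ht
  have hLadd : ∀ s t : ℝ, 0 < s → 0 < t → L (s + t) = L s + L t := by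
    intro s t hs ht
    rw [hLval _ (by linarith), hLval _ hs, hLval _ ht,
      hcocycle t s ht hs x₀ x₀ x₀,
      Real.log_mul (hrpos s hs x₀ x₀).ne' (hrpos t ht x₀ x₀).ne']
  -- extend to an additive function on all of ℝ
  set g : ℝ → ℝ := fun t => L (t + (|t| + 1)) - L (|t| + 1) with hgdef
  have hcontarg : ∀ c : ℝ, 0 < c → 0 < c + (|c| + 1) := by
    intro c _
    have := abs_nonneg c
    have := neg_abs_le c
    linarith
  have hpos1 : ∀ c : ℝ, 0 < c + (|c| + 1) := by
    intro c
    have := neg_abs_le c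
    linarith
  have hgm : Measurable g := by
    have h1 : Measurable fun t : ℝ => t + (|t| + 1) :=
      (continuous_id.add (continuous_abs.add continuous_const)).measurable
    have h2 : Measurable fun t : ℝ => |t| + 1 :=
      (continuous_abs.add continuous_const).measurable
    exact (hLmeas.comp h1).sub (hLmeas.comp h2)
  have key : ∀ t u : ℝ, 0 < u → 0 < t + u → g t = L (t + u) - L u := by
    intro t u hu htu
    have hv : 0 < |t| + 1 := by positivity
    have htv : 0 < t + (|t| + 1) := hpos1 t
    have e1 : L (t + u + (|t| + 1)) = L (t + u) + L (|t| + 1) := hLadd _ _ htu hv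
    have e2 : L (t + (|t| + 1) + u) = L (t + (|t| + 1)) + L u := hLadd _ _ htv hu
    have : t + u + (|t| + 1) = t + (|t| + 1) + u := by ring
    rw [this] at e1
    rw [e2] at e1
    simp only [hgdef]
    linarith
  have hgadd : ∀ a b : ℝ, g (a + b) = g a + g b := by
    intro a b
    have ha : 0 < a + (|a| + 1) := hpos1 a
    have hb : 0 < b + (|b| + 1) := hpos1 b
    have hu : 0 < (|a| + 1) + (|b| + 1) := by positivity
    have htu : 0 < (a + b) + ((|a| + 1) + (|b| + 1)) := by
      have := hpos1 a; have := hpos1 b; linarith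
    have e0 := key (a + b) _ hu htu
    have e1 : L ((a + b) + ((|a| + 1) + (|b| + 1)))
        = L (a + (|a| + 1)) + L (b + (|b| + 1)) := by
      have : (a + b) + ((|a| + 1) + (|b| + 1)) = (a + (|a| + 1)) + (b + (|b| + 1)) := by
        ring
      rw [this]
      exact hLadd _ _ ha hb
    have e2 : L ((|a| + 1) + (|b| + 1)) = L (|a| + 1) + L (|b| + 1) :=
      hLadd _ _ (by positivity) (by positivity)
    simp only [hgdef] at e0 ⊢
    rw [e1, e2] at e0
    linarith
  have hlin := additive_measurable_linear g hgm (fun s t => hgadd s t)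
  have hgL : ∀ t : ℝ, 0 < t → g t = L t := by
    intro t ht
    have := key t 1 one_pos (by linarith)
    rw [hLadd t 1 ht one_pos] at this
    linarith
  set l : ℝ := g 1 with hl
  have hexp : ∀ t : ℝ, 0 < t → r t x₀ x₀ = Real.exp (l * t) := by
    intro t ht
    have h1 : Real.log (r t x₀ x₀) = l * t := by
      rw [← hLval t ht, ← hgL t ht]
      exact hlin t
    rw [← Real.exp_log (hrpos t ht x₀ x₀), h1]
  refine ⟨l, fun y => r 1 x₀ y, fun x => hrpos 1 one_pos x₀ x, ?_⟩
  intro t ht x y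
  have h1 : r (1 + t) x₀ y = r 1 x₀ x * r t x y := hcocycle t 1 ht one_pos x₀ y x
  have h2 : r (t + 1) x₀ y = r t x₀ x₀ * r 1 x₀ y := hcocycle 1 t one_pos ht x₀ y x₀
  rw [add_comm] at h1
  rw [h1] at h2
  rw [hexp t ht] at h2
  have hx : r 1 x₀ x ≠ 0 := (hrpos 1 one_pos x₀ x).ne'
  field_simp
  linarith [h2]
end

section
/- Let (E, ℰ) be a measurable space, m a nonzero σ-finite measure on E, and p : E × E → (0,∞) a measurable function with ∫_E p(x,y) m(dy) = 1 for every x ∈ E. Let u : E → (0,∞) be measurable and suppose that for m-almost every x ∈ E, ∫_E p(x,y)·u(y) m(dy) = u(x) and ∫_E p(x,y)·u(y)⁻¹ m(dy) = u(x)⁻¹. Then u is m-almost everywhere equal to a constant. -/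
open MeasureTheory

/-- If `p` is a strictly positive Markov transition density w.r.t. a nonzero
σ-finite reference measure `m`, and both `u` and `1/u` are invariant functions
of the associated Markov operator, then `u` is `m`-a.e. constant. -/
theorem invariant_function_constant
    {E : Type*} [MeasurableSpace E] (m : Measure E) [SigmaFinite m] (hm : m ≠ 0)
    (p : E → E → ℝ)
    (hpmeas : Measurable fun z : E × E => p z.1 z.2)
    (hppos : ∀ x y : E, 0 < p x y)
    (hpnorm : ∀ x : E, ∫ y, p x y ∂m = 1)
    (u : E → ℝ) (humeas : Measurable u) (hupos : ∀ x : E, 0 < u x)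
    (hinv : ∀ᵐ x ∂m, ∫ y, p x y * u y ∂m = u x)
    (hinv' : ∀ᵐ x ∂m, ∫ y, p x y * (u y)⁻¹ ∂m = (u x)⁻¹) :
    ∃ c : ℝ, ∀ᵐ x ∂m, u x = c := by
  have hae : (MeasureTheory.ae m).NeBot := ae_neBot.mpr hm
  have key : ∀ᵐ x ∂m, ∀ᵐ y ∂m, u y = u x := by
    filter_upwards [hinv, hinv'] with x h1 h2
    have hux := hupos x
    have hip : Integrable (fun y => p x y) m := by
      by_contra h
      have h0 : (1:ℝ) = 0 := by rw [← hpnorm x, integral_undef h]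
      exact one_ne_zero h0
    have hiu : Integrable (fun y => p x y * u y) m := by
      by_contra h
      have h0 : u x = 0 := by rw [← h1, integral_undef h]
      exact hux.ne' h0
    have hiu' : Integrable (fun y => p x y * (u y)⁻¹) m := by
      by_contra h
      have h0 : (u x)⁻¹ = 0 := by rw [← h2, integral_undef h]
      exact (inv_pos.mpr hux).ne' h0
    set g : E → ℝ :=
      fun y => (u x)⁻¹ * (p x y * u y) + u x * (p x y * (u y)⁻¹) - 2 * p x y with hg
    have heq : ∀ y, g y = p x y * (u y - u x)^2 / (u x * u y) := by
      intro y
      have huy := hupos y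
      rw [hg]
      field_simp
      ring
    have hgint : Integrable g m :=
      ((hiu.const_mul _).add (hiu'.const_mul _)).sub (hip.const_mul _)
    have hgnn : 0 ≤ g := fun y => by
      rw [heq y]
      have := hupos y
      have := hppos x y
      positivity
    have hgzero : ∫ y, g y ∂m = 0 := by
      rw [hg]
      simp only
      have hAB : Integrable
          (fun y => (u x)⁻¹ * (p x y * u y) + u x * (p x y * (u y)⁻¹)) m :=
        (hiu.const_mul _).add (hiu'.const_mul _)
      rw [integral_sub hAB (hip.const_mul _),
        integral_add (hiu.const_mul _) (hiu'.const_mul _),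
        integral_const_mul, integral_const_mul, integral_const_mul, h1, h2, hpnorm]
      field_simp
      norm_num
    have hzero := (integral_eq_zero_iff_of_nonneg hgnn hgint).mp hgzero
    filter_upwards [hzero] with y hy
    have hy' : g y = 0 := hy
    rw [heq y] at hy'
    have hpxy := hppos x y
    have huy := hupos y
    have hsq : (u y - u x)^2 = 0 := by
      have hden : u x * u y ≠ 0 := by positivity
      rcases div_eq_zero_iff.mp hy' with h | h
      · rcases mul_eq_zero.mp h with h' | h'
        · exact absurd h' hpxy.ne'
        · exact h'
      · exact absurd h hden
    have := pow_eq_zero_iff (n := 2) (by norm_num) |>.mp hsq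
    linarith
  obtain ⟨x₀, hx₀⟩ := key.exists
  exact ⟨u x₀, hx₀⟩
end

section
/- Let (E, ℰ) be a measurable space, m a σ-finite measure on E, and p : (0,∞) × E × E → (0,∞) a jointly measurable function satisfying the Chapman–Kolmogorov identity p_{t+s}(x,y) = ∫_E p_t(x,z)·p_s(z,y) m(dz) for all s, t > 0 and x, y ∈ E. Suppose E carries a metric topology with its Borel σ-algebra and that for every t > 0 and y ∈ E the map x ↦ p_t(x,y) is continuous. Then for every 0 < s < t, every y ∈ E, and every bounded measurable h : E → ℝ, the map x ↦ ∫_E [p_s(x,z)·p_{t−s}(z,y)/p_t(x,y)]·h(z) m(dz) is continuous on E. -/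
open MeasureTheory Filter

lemma scheffe_aux {E : Type*} [MeasurableSpace E] (m : Measure E)
    (f : E → ℝ) (fn : ℕ → E → ℝ)
    (hf : Integrable f m) (hfn : ∀ n, Integrable (fn n) m)
    (hnn : ∀ n z, 0 ≤ fn n z) (hfnn : ∀ z, 0 ≤ f z)
    (hptw : ∀ z, Tendsto (fun n => fn n z) atTop (nhds (f z)))
    (hint : Tendsto (fun n => ∫ z, fn n z ∂m) atTop (nhds (∫ z, f z ∂m))) :
    Tendsto (fun n => ∫ z, |fn n z - f z| ∂m) atTop (nhds 0) := by
  have hmin : ∀ n, Integrable (fun z => min (fn n z) (f z)) m :=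
    fun n => (hfn n).inf hf
  have key : ∀ n z, |fn n z - f z| = fn n z + f z - 2 * min (fn n z) (f z) := by
    intro n z
    rcases le_total (fn n z) (f z) with h | h
    · rw [abs_of_nonpos (by linarith), min_eq_left h]; ring
    · rw [abs_of_nonneg (by linarith), min_eq_right h]; ring
  have hminT : Tendsto (fun n => ∫ z, min (fn n z) (f z) ∂m) atTop (nhds (∫ z, f z ∂m)) := by
    refine tendsto_integral_of_dominated_convergence (fun z => f z)
      (fun n => (hmin n).aestronglyMeasurable) hf ?_ ?_
    · intro n
      filter_upwards with z
      rw [Real.norm_eq_abs, abs_of_nonneg (le_min (hnn n z) (hfnn z))]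
      exact min_le_right _ _
    · filter_upwards with z
      have := (hptw z).min (tendsto_const_nhds (x := f z) (f := atTop))
      simpa [min_self] using this
  have heq : ∀ n, ∫ z, |fn n z - f z| ∂m
      = (∫ z, fn n z ∂m) + (∫ z, f z ∂m) - 2 * ∫ z, min (fn n z) (f z) ∂m := by
    intro n
    calc ∫ z, |fn n z - f z| ∂m
        = ∫ z, (fn n z + f z) - 2 * min (fn n z) (f z) ∂m := by
          refine integral_congr_ae ?_
          filter_upwards with z using key n z
      _ = (∫ z, fn n z + f z ∂m) - ∫ z, 2 * min (fn n z) (f z) ∂m :=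
          integral_sub ((hfn n).add hf) ((hmin n).const_mul 2)
      _ = (∫ z, fn n z ∂m) + (∫ z, f z ∂m) - 2 * ∫ z, min (fn n z) (f z) ∂m := by
          rw [integral_add (hfn n) hf, MeasureTheory.integral_const_mul]
  simp_rw [heq]
  have h0 : (∫ z, f z ∂m) + (∫ z, f z ∂m) - 2 * (∫ z, f z ∂m) = 0 := by ring
  rw [← h0]
  exact (hint.add tendsto_const_nhds).sub (tendsto_const_nhds.mul hminT)

/-- Lemma (2.8) in density form: if the transition densities `p_t(·,y)` are
continuous in the space variable, then bridge-marginal expectations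
`x ↦ ∫ [p_s(x,z) p_{t−s}(z,y)/p_t(x,y)] h(z) m(dz)` are continuous in the
starting point `x`. -/
theorem bridge_marginal_continuity
    {E : Type*} [MetricSpace E] [MeasurableSpace E] [BorelSpace E]
    (m : Measure E) [SigmaFinite m]
    (p : ℝ → E → E → ℝ)
    (hpmeas : Measurable fun z : ℝ × E × E => p z.1 z.2.1 z.2.2)
    (hppos : ∀ t : ℝ, 0 < t → ∀ x y : E, 0 < p t x y)
    (hCK : ∀ s t : ℝ, 0 < s → 0 < t → ∀ x y : E,
      p (t + s) x y = ∫ z, p t x z * p s z y ∂m)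
    (hcont : ∀ t : ℝ, 0 < t → ∀ y : E, Continuous fun x : E => p t x y) :
    ∀ s t : ℝ, 0 < s → s < t → ∀ (y : E) (h : E → ℝ),
      Measurable h → (∃ C : ℝ, ∀ z : E, |h z| ≤ C) →
      Continuous fun x : E =>
        ∫ z, (p s x z * p (t - s) z y / p t x y) * h z ∂m := by
  intro s t hs hst y h hmeas hbdd
  obtain ⟨C, hC⟩ := hbdd
  have hts : (0:ℝ) < t - s := by linarith
  have ht : (0:ℝ) < t := hs.trans hst
  set f : E → E → ℝ := fun x z => p s x z * p (t - s) z y with hf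
  have mf : ∀ x, Measurable (f x) := by
    intro x
    exact (hpmeas.comp (measurable_const.prodMk
        (measurable_const.prodMk measurable_id))).mul
      (hpmeas.comp (measurable_const.prodMk
        (measurable_id.prodMk measurable_const)))
  have hfnn : ∀ x z, 0 ≤ f x z := fun x z =>
    le_of_lt (mul_pos (hppos s hs x z) (hppos (t - s) hts z y))
  have hfint : ∀ x, ∫ z, f x z ∂m = p t x y := by
    intro x
    have := hCK (t - s) s hts hs x y
    rw [show s + (t - s) = t by ring] at this
    exact this.symm
  have hInt : ∀ x, Integrable (f x) m := by
    intro x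
    by_contra hni
    have := hfint x
    rw [integral_undef hni] at this
    exact (hppos t ht x y).ne (by linarith)
  have hInth : ∀ x, Integrable (fun z => f x z * h z) m := by
    intro x
    have : Integrable (fun z => h z * f x z) m :=
      (hInt x).bdd_mul hmeas.aestronglyMeasurable
        (c := C) (Filter.Eventually.of_forall fun z => by rw [Real.norm_eq_abs]; exact hC z)
    exact this.congr (by filter_upwards with z using mul_comm _ _)
  have key : ∀ x, ∫ z, (p s x z * p (t - s) z y / p t x y) * h z ∂m
      = (∫ z, f x z * h z ∂m) / p t x y := by
    intro x
    rw [← integral_div]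
    refine integral_congr_ae ?_
    filter_upwards with z
    simp only [hf]
    ring
  simp_rw [key]
  rw [continuous_iff_seqContinuous]
  intro u x hu
  set C' : ℝ := max C 0 with hC'
  have hC'nn : 0 ≤ C' := le_max_right _ _
  have hC'le : ∀ z, |h z| ≤ C' := fun z => le_max_of_le_left (hC z)
  -- pointwise convergence of densities
  have hptw : ∀ z, Tendsto (fun n => f (u n) z) atTop (nhds (f x z)) := by
    intro z
    exact (((hcont s hs z).tendsto x).comp hu).mul tendsto_const_nhds
  -- convergence of total masses
  have hmass : Tendsto (fun n => ∫ z, f (u n) z ∂m) atTop (nhds (∫ z, f x z ∂m)) := by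
    simp_rw [hfint]
    exact ((hcont t ht y).tendsto x).comp hu
  have hSch : Tendsto (fun n => ∫ z, |f (u n) z - f x z| ∂m) atTop (nhds 0) :=
    scheffe_aux m (f x) (fun n => f (u n)) (hInt x) (fun n => hInt (u n))
      (fun n z => hfnn (u n) z) (hfnn x) hptw hmass
  have hIntabs : ∀ n, Integrable (fun z => |f (u n) z - f x z|) m :=
    fun n => ((hInt (u n)).sub (hInt x)).abs
  have bound : ∀ n, |(∫ z, f (u n) z * h z ∂m) - ∫ z, f x z * h z ∂m|
      ≤ C' * ∫ z, |f (u n) z - f x z| ∂m := by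
    intro n
    rw [← integral_sub (hInth (u n)) (hInth x)]
    calc |∫ z, f (u n) z * h z - f x z * h z ∂m|
        ≤ ∫ z, |f (u n) z * h z - f x z * h z| ∂m := by
          simpa [Real.norm_eq_abs] using
            norm_integral_le_integral_norm (fun z => f (u n) z * h z - f x z * h z) (μ := m)
      _ ≤ ∫ z, C' * |f (u n) z - f x z| ∂m := by
          refine integral_mono (((hInth (u n)).sub (hInth x)).abs)
            ((hIntabs n).const_mul C') ?_
          intro z
          calc |f (u n) z * h z - f x z * h z|
              = |f (u n) z - f x z| * |h z| := by rw [← abs_mul]; ring_nf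
            _ ≤ |f (u n) z - f x z| * C' :=
                mul_le_mul_of_nonneg_left (hC'le z) (abs_nonneg _)
            _ = C' * |f (u n) z - f x z| := mul_comm _ _
      _ = C' * ∫ z, |f (u n) z - f x z| ∂m := MeasureTheory.integral_const_mul _ _
  have hnum : Tendsto (fun n => ∫ z, f (u n) z * h z ∂m) atTop
      (nhds (∫ z, f x z * h z ∂m)) := by
    rw [tendsto_iff_norm_sub_tendsto_zero]
    have hrhs : Tendsto (fun n => C' * ∫ z, |f (u n) z - f x z| ∂m) atTop (nhds 0) := by
      simpa using tendsto_const_nhds.mul hSch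
    refine squeeze_zero (fun n => norm_nonneg _) (fun n => ?_) hrhs
    simpa [Real.norm_eq_abs] using bound n
  have hden : Tendsto (fun n => p t (u n) y) atTop (nhds (p t x y)) :=
    ((hcont t ht y).tendsto x).comp hu
  exact hnum.div hden (hppos t ht x y).ne'
end

section
/- Let (E, ℰ) be a measurable space, m a σ-finite measure on E, and p : (0,∞) × E × E → (0,∞) a jointly measurable function satisfying the Chapman–Kolmogorov identity p_{t+s}(x,y) = ∫_E p_t(x,z)·p_s(z,y) m(dz) for all s, t > 0 and x, y ∈ E. Fix x, y ∈ E, t > 0, n ≥ 1 and times 0 = s₀ < s₁ < ⋯ < sₙ < s_{n+1} = t, and define f : Eⁿ → (0,∞) by f(z₁,…,zₙ) := [∏_{i=0}^{n} p_{s_{i+1}−s_i}(z_i, z_{i+1})]/p_t(x,y), where z₀ := x and z_{n+1} := y. Then: (a) ∫_{Eⁿ} f d(mⁿ) = 1, so f is a probability density on Eⁿ with respect to the n-fold product measure; and (b) for each 1 ≤ j ≤ n, integrating f over the j-th coordinate with respect to m yields the corresponding density built from the times s₁, …, s_{j−1}, s_{j+1}, …, sₙ. -/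
open MeasureTheory

namespace BridgeAux
set_option linter.unusedSectionVars false
set_option maxHeartbeats 800000

variable {E : Type*} [MeasurableSpace E]

def pathExt (a b : E) (n : ℕ) (w : Fin n → E) (i : ℕ) : E :=
  if i = 0 then a else if h : i - 1 < n then w ⟨i - 1, h⟩ else b

lemma pathExt_cons (a b ζ : E) (n : ℕ) (v : Fin n → E) (i : ℕ) :
    pathExt a b (n + 1) (Fin.cons ζ v) (i + 1) = pathExt ζ b n v i := by
  rcases i with _ | k
  · simp [pathExt]
  · by_cases hk : k < n
    · have h1 : k + 1 + 1 - 1 < n + 1 := by omega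
      have h2 : k + 1 - 1 < n := by omega
      simp only [pathExt, if_neg (Nat.succ_ne_zero _), dif_pos h1, dif_pos h2]
      rw [show (⟨k + 1 + 1 - 1, h1⟩ : Fin (n + 1)) = Fin.succ ⟨k, hk⟩ from Fin.ext (by simp),
        Fin.cons_succ]
      rfl
    · simp [pathExt, hk, show ¬ (k + 1 + 1 - 1 < n + 1) by omega]

lemma measurable_pathExt (a b : E) (n : ℕ) (i : ℕ) :
    Measurable fun w : Fin n → E => pathExt a b n w i := by
  unfold pathExt
  split
  · exact measurable_const
  · split
    · exact measurable_pi_apply _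
    · exact measurable_const

lemma measurable_p2 {p : ℝ → E → E → ℝ}
    (hpmeas : Measurable fun z : ℝ × E × E => p z.1 z.2.1 z.2.2) (c : ℝ) :
    Measurable fun q : E × E => p c q.1 q.2 :=
  hpmeas.comp (measurable_const.prodMk measurable_id)

lemma measurable_F {p : ℝ → E → E → ℝ}
    (hpmeas : Measurable fun z : ℝ × E × E => p z.1 z.2.1 z.2.2)
    (a b : E) (n N : ℕ) (u : ℕ → ℝ) :
    Measurable fun w : Fin n → E => ∏ i ∈ Finset.range N,
      ENNReal.ofReal (p (u (i + 1) - u i) (pathExt a b n w i) (pathExt a b n w (i + 1))) := by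
  refine Finset.measurable_prod _ fun i _ => ?_
  exact ENNReal.measurable_ofReal.comp ((measurable_p2 hpmeas _).comp
    ((measurable_pathExt a b n i).prodMk (measurable_pathExt a b n (i + 1))))

lemma u_lt (n : ℕ) (u : ℕ → ℝ) (hu : ∀ i ≤ n, u i < u (i + 1)) :
    ∀ i j, i < j → j ≤ n + 1 → u i < u j := by
  intro i j hij hj
  induction j with
  | zero => omega
  | succ k IH =>
    rcases Nat.lt_or_ge i k with h | h
    · exact (IH h (by omega)).trans (hu k (by omega))
    · have : i = k := by omega
      subst this
      exact hu i (by omega)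

lemma ck_integrable (m : Measure E) (p : ℝ → E → E → ℝ)
    (hppos : ∀ t : ℝ, 0 < t → ∀ x y : E, 0 < p t x y)
    (hCK : ∀ s t : ℝ, 0 < s → 0 < t → ∀ x y : E,
      p (t + s) x y = ∫ z, p t x z * p s z y ∂m)
    {s t : ℝ} (hs : 0 < s) (ht : 0 < t) (x y : E) :
    Integrable (fun z => p t x z * p s z y) m := by
  by_contra h
  have h2 := hCK s t hs ht x y
  rw [integral_undef h] at h2
  exact absurd h2 (ne_of_gt (hppos _ (by linarith) x y))

lemma ck_lintegral (m : Measure E) (p : ℝ → E → E → ℝ)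
    (hppos : ∀ t : ℝ, 0 < t → ∀ x y : E, 0 < p t x y)
    (hCK : ∀ s t : ℝ, 0 < s → 0 < t → ∀ x y : E,
      p (t + s) x y = ∫ z, p t x z * p s z y ∂m)
    {s t : ℝ} (hs : 0 < s) (ht : 0 < t) (x y : E) :
    ∫⁻ z, ENNReal.ofReal (p t x z) * ENNReal.ofReal (p s z y) ∂m
      = ENNReal.ofReal (p (t + s) x y) := by
  have hnn : 0 ≤ᵐ[m] fun z => p t x z * p s z y :=
    Filter.Eventually.of_forall fun z =>
      mul_nonneg (hppos t ht x z).le (hppos s hs z y).le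
  rw [hCK s t hs ht x y,
    ofReal_integral_eq_lintegral_ofReal (ck_integrable m p hppos hCK hs ht x y) hnn]
  refine lintegral_congr fun z => ?_
  rw [ENNReal.ofReal_mul (hppos t ht x z).le]

lemma main_lintegral (m : Measure E) [SigmaFinite m] (p : ℝ → E → E → ℝ)
    (hpmeas : Measurable fun z : ℝ × E × E => p z.1 z.2.1 z.2.2)
    (hppos : ∀ t : ℝ, 0 < t → ∀ x y : E, 0 < p t x y)
    (hCK : ∀ s t : ℝ, 0 < s → 0 < t → ∀ x y : E,
      p (t + s) x y = ∫ z, p t x z * p s z y ∂m) :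
    ∀ (n : ℕ) (u : ℕ → ℝ) (a b : E), (∀ i ≤ n, u i < u (i + 1)) →
      (∫⁻ w : Fin n → E, ∏ i ∈ Finset.range (n + 1),
          ENNReal.ofReal (p (u (i + 1) - u i) (pathExt a b n w i) (pathExt a b n w (i + 1)))
        ∂(Measure.pi fun _ : Fin n => m))
        = ENNReal.ofReal (p (u (n + 1) - u 0) a b) := by
  intro n
  induction n with
  | zero =>
    intro u a b hu
    have hc : ∀ w : Fin 0 → E, (∏ i ∈ Finset.range 1,
        ENNReal.ofReal (p (u (i + 1) - u i) (pathExt a b 0 w i) (pathExt a b 0 w (i + 1))))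
        = ENNReal.ofReal (p (u 1 - u 0) a b) := by
      intro w; simp [pathExt]
    rw [lintegral_congr hc, lintegral_const]
    simp
  | succ n IH =>
    intro u a b hu
    -- peel off the first coordinate
    have hmp := measurePreserving_piFinSuccAbove (fun _ : Fin (n + 1) => m) 0
    set F : (Fin (n + 1) → E) → ENNReal := fun w => ∏ i ∈ Finset.range (n + 2),
      ENNReal.ofReal (p (u (i + 1) - u i) (pathExt a b (n + 1) w i)
        (pathExt a b (n + 1) w (i + 1))) with hF
    have hFmeas : Measurable F := measurable_F hpmeas a b (n + 1) (n + 2) u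
    have hconsmeas : Measurable fun q : E × (Fin n → E) => (Fin.cons q.1 q.2 : Fin (n + 1) → E) := by
      refine measurable_pi_lambda _ fun i => ?_
      refine Fin.cases ?_ (fun j => ?_) i
      · simpa using (measurable_fst : Measurable fun q : E × (Fin n → E) => q.1)
      · simpa [Function.comp_def] using (measurable_pi_apply j).comp
          (measurable_snd : Measurable fun q : E × (Fin n → E) => q.2)
    have hsy : MeasurePreserving
        (MeasurableEquiv.piFinSuccAbove (fun _ : Fin (n + 1) => E) 0).symm
        (m.prod (Measure.pi fun _ : Fin n => m)) (Measure.pi fun _ : Fin (n + 1) => m) :=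
      MeasurePreserving.symm _ hmp
    have step1 : (∫⁻ w : Fin (n + 1) → E, F w ∂(Measure.pi fun _ : Fin (n + 1) => m))
        = ∫⁻ q : E × (Fin n → E), F (Fin.cons q.1 q.2)
            ∂(m.prod (Measure.pi fun _ : Fin n => m)) := by
      rw [← hsy.lintegral_comp hFmeas]
      refine lintegral_congr fun q => ?_
      congr 1
      show (Fin.insertNthEquiv (fun _ : Fin (n + 1) => E) 0) q = Fin.cons q.1 q.2
      rw [← Fin.insertNth_zero' q.1 q.2]
      rfl
    rw [step1, lintegral_prod (fun q : E × (Fin n → E) => F (Fin.cons q.1 q.2))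
      ((hFmeas.comp hconsmeas).aemeasurable)]
    have inner : ∀ ζ : E, (∫⁻ v : Fin n → E, F (Fin.cons ζ v)
          ∂(Measure.pi fun _ : Fin n => m))
        = ENNReal.ofReal (p (u 1 - u 0) a ζ) * ENNReal.ofReal (p (u (n + 2) - u 1) ζ b) := by
      intro ζ
      have hsplit : ∀ v : Fin n → E, F (Fin.cons ζ v)
          = ENNReal.ofReal (p (u 1 - u 0) a ζ) *
            ∏ i ∈ Finset.range (n + 1), ENNReal.ofReal
              (p (u (i + 2) - u (i + 1)) (pathExt ζ b n v i) (pathExt ζ b n v (i + 1))) := by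
        intro v
        simp only [hF]
        have h0 : pathExt a b (n + 1) (Fin.cons ζ v) 0 = a := rfl
        have h1 : pathExt a b (n + 1) (Fin.cons ζ v) 1 = ζ := by
          simp [pathExt]
        conv_lhs => rw [Finset.prod_range_succ']
        rw [mul_comm, h0, h1]
        congr 1
        refine Finset.prod_congr rfl fun i _ => ?_
        rw [pathExt_cons, pathExt_cons]
      simp only [hsplit]
      rw [lintegral_const_mul _ (measurable_F hpmeas ζ b n (n + 1) (fun k => u (k + 1)))]
      congr 1
      exact IH (fun k => u (k + 1)) ζ b (fun i hi => hu (i + 1) (by omega))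
    simp only [inner]
    rw [ck_lintegral m p hppos hCK
      (sub_pos.mpr (u_lt (n + 1) u hu 1 (n + 2) (by omega) (by omega)))
      (sub_pos.mpr (hu 0 (by omega)))]
    congr 1
    ring_nf

lemma zext_eq_pathExt {n : ℕ} (x y : E) (zext : (Fin n → E) → ℕ → E)
    (hz0 : ∀ w : Fin n → E, zext w 0 = x)
    (hzlast : ∀ w : Fin n → E, zext w (n + 1) = y)
    (hzmid : ∀ (w : Fin n → E) (i : Fin n), zext w ((i : ℕ) + 1) = w i)
    (w : Fin n → E) (i : ℕ) (hi : i ≤ n + 1) :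
    zext w i = pathExt x y n w i := by
  rcases i with _ | k
  · rw [hz0]; rfl
  · rcases Nat.lt_or_ge k n with hk | hk
    · have h2 : k + 1 - 1 < n := by omega
      have := hzmid w ⟨k, hk⟩
      simp only [Fin.val_mk] at this
      rw [this]
      simp [pathExt, hk]
    · have hkn : k = n := by omega
      subst hkn
      rw [hzlast]
      simp [pathExt]

end BridgeAux

open BridgeAux

/-- Bridge finite-dimensional densities: for a strictly positive transition
density `p` satisfying Chapman–Kolmogorov, the candidate bridge density
`f(z₁,…,zₙ) = ∏ p_{s_{i+1}−s_i}(z_i,z_{i+1}) / p_t(x,y)` (with `z₀ = x`,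
`z_{n+1} = y`) (a) integrates to `1` over `Eⁿ`, and (b) integrating out the
`j`-th coordinate yields the corresponding density for the times with `s_j`
omitted. -/
theorem bridge_densities_consistent
    {E : Type*} [MeasurableSpace E] (m : Measure E) [SigmaFinite m]
    (p : ℝ → E → E → ℝ)
    (hpmeas : Measurable fun z : ℝ × E × E => p z.1 z.2.1 z.2.2)
    (hppos : ∀ t : ℝ, 0 < t → ∀ x y : E, 0 < p t x y)
    (hCK : ∀ s t : ℝ, 0 < s → 0 < t → ∀ x y : E,
      p (t + s) x y = ∫ z, p t x z * p s z y ∂m)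
    (x y : E) (t : ℝ) (n : ℕ) (hn : 1 ≤ n)
    (s : ℕ → ℝ) (hs0 : s 0 = 0) (hst : s (n + 1) = t)
    (hsinc : ∀ i : ℕ, i ≤ n → s i < s (i + 1))
    -- `zext w` is the path `x, w 0, w 1, …, w (n-1), y` indexed by `0,…,n+1`:
    (zext : (Fin n → E) → ℕ → E)
    (hz0 : ∀ w : Fin n → E, zext w 0 = x)
    (hzlast : ∀ w : Fin n → E, zext w (n + 1) = y)
    (hzmid : ∀ (w : Fin n → E) (i : Fin n), zext w ((i : ℕ) + 1) = w i) :
    (∫ w : Fin n → E,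
        (∏ i ∈ Finset.range (n + 1),
          p (s (i + 1) - s i) (zext w i) (zext w (i + 1))) / p t x y
        ∂(Measure.pi fun _ : Fin n => m)) = 1 ∧
    (∀ j : ℕ, 1 ≤ j → j ≤ n → ∀ w : ℕ → E, w 0 = x → w n = y →
      (∫ ζ : E,
          (∏ i ∈ Finset.range (n + 1),
            p (s (i + 1) - s i)
              (if i < j then w i else if i = j then ζ else w (i - 1))
              (if i + 1 < j then w (i + 1) else if i + 1 = j then ζ else w i))
            / p t x y ∂m)
        = (∏ i ∈ Finset.range n,
            p ((if i + 1 < j then s (i + 1) else s (i + 2))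
                - (if i < j then s i else s (i + 1)))
              (w i) (w (i + 1))) / p t x y) := by
  have ht : 0 < t := by
    have h := u_lt n s hsinc 0 (n + 1) (by omega) (le_refl _)
    rw [hs0, hst] at h
    exact h
  have hc : 0 < p t x y := hppos t ht x y
  constructor
  · -- part (a)
    set G : (Fin n → E) → ℝ := fun w => ∏ i ∈ Finset.range (n + 1),
      p (s (i + 1) - s i) (pathExt x y n w i) (pathExt x y n w (i + 1)) with hG
    have hGmeas : Measurable G := by
      refine Finset.measurable_prod _ fun i _ => ?_
      exact (measurable_p2 hpmeas _).comp
        ((measurable_pathExt x y n i).prodMk (measurable_pathExt x y n (i + 1)))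
    have hGnn : ∀ w, 0 ≤ G w := by
      intro w
      refine Finset.prod_nonneg fun i hi => ?_
      exact (hppos _ (sub_pos.mpr (hsinc i (by
        have := Finset.mem_range.mp hi; omega))) _ _).le
    have key := main_lintegral m p hpmeas hppos hCK n s x y hsinc
    have hsn : s (n + 1) - s 0 = t := by rw [hs0, hst]; ring
    rw [hsn] at key
    have hof : ∀ w, ENNReal.ofReal (G w) = ∏ i ∈ Finset.range (n + 1),
        ENNReal.ofReal (p (s (i + 1) - s i) (pathExt x y n w i) (pathExt x y n w (i + 1))) := by
      intro w
      exact ENNReal.ofReal_prod_of_nonneg fun i hi =>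
        (hppos _ (sub_pos.mpr (hsinc i (by
          have := Finset.mem_range.mp hi; omega))) _ _).le
    have hIG : (∫ w : Fin n → E, G w ∂(Measure.pi fun _ : Fin n => m)) = p t x y := by
      rw [integral_eq_lintegral_of_nonneg_ae (Filter.Eventually.of_forall hGnn)
        hGmeas.aestronglyMeasurable]
      rw [lintegral_congr hof, key, ENNReal.toReal_ofReal hc.le]
    have heq : (fun w : Fin n → E =>
        (∏ i ∈ Finset.range (n + 1),
          p (s (i + 1) - s i) (zext w i) (zext w (i + 1))) / p t x y)
        = fun w => G w / p t x y := by
      funext w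
      congr 1
      refine Finset.prod_congr rfl fun i hi => ?_
      have hi' := Finset.mem_range.mp hi
      rw [zext_eq_pathExt x y zext hz0 hzlast hzmid w i (by omega),
        zext_eq_pathExt x y zext hz0 hzlast hzmid w (i + 1) (by omega)]
    rw [heq, integral_div, hIG, div_self (ne_of_gt hc)]
  · -- part (b)
    intro j hj1 hjn w hw0 hwn
    obtain ⟨k, rfl⟩ : ∃ k, j = k + 1 := ⟨j - 1, by omega⟩
    have htk : 0 < s (k + 1) - s k := sub_pos.mpr (hsinc k (by omega))
    have hsk : 0 < s (k + 2) - s (k + 1) := sub_pos.mpr (hsinc (k + 1) (by omega))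
    set A : ℝ := ∏ i ∈ Finset.range k, p (s (i + 1) - s i) (w i) (w (i + 1)) with hA
    set B : ℝ := ∏ i ∈ Finset.Ico (k + 2) (n + 1),
      p (s (i + 1) - s i) (w (i - 1)) (w i) with hB
    have key : ∀ ζ : E, (∏ i ∈ Finset.range (n + 1), p (s (i + 1) - s i)
          (if i < k + 1 then w i else if i = k + 1 then ζ else w (i - 1))
          (if i + 1 < k + 1 then w (i + 1) else if i + 1 = k + 1 then ζ else w i))
        = (A * B) * (p (s (k + 1) - s k) (w k) ζ * p (s (k + 2) - s (k + 1)) ζ (w (k + 1))) := by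
      intro ζ
      rw [Finset.range_eq_Ico,
        ← Finset.prod_Ico_consecutive _ (Nat.zero_le (k + 2)) (show k + 2 ≤ n + 1 by omega),
        ← Finset.range_eq_Ico, Finset.prod_range_succ, Finset.prod_range_succ]
      have e1 : (∏ i ∈ Finset.range k, p (s (i + 1) - s i)
          (if i < k + 1 then w i else if i = k + 1 then ζ else w (i - 1))
          (if i + 1 < k + 1 then w (i + 1) else if i + 1 = k + 1 then ζ else w i)) = A := by
        refine Finset.prod_congr rfl fun i hi => ?_
        have hi' := Finset.mem_range.mp hi
        rw [if_pos (by omega), if_pos (by omega)]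
      have e2 : (p (s (k + 1) - s k)
          (if k < k + 1 then w k else if k = k + 1 then ζ else w (k - 1))
          (if k + 1 < k + 1 then w (k + 1) else if k + 1 = k + 1 then ζ else w k))
          = p (s (k + 1) - s k) (w k) ζ := by
        rw [if_pos (by omega), if_neg (by omega), if_pos rfl]
      have e3 : (p (s (k + 1 + 1) - s (k + 1))
          (if k + 1 < k + 1 then w (k + 1) else if k + 1 = k + 1 then ζ else w (k + 1 - 1))
          (if k + 1 + 1 < k + 1 then w (k + 1 + 1)
            else if k + 1 + 1 = k + 1 then ζ else w (k + 1)))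
          = p (s (k + 2) - s (k + 1)) ζ (w (k + 1)) := by
        rw [if_neg (by omega), if_pos rfl, if_neg (by omega), if_neg (by omega)]
      have e4 : (∏ i ∈ Finset.Ico (k + 2) (n + 1), p (s (i + 1) - s i)
          (if i < k + 1 then w i else if i = k + 1 then ζ else w (i - 1))
          (if i + 1 < k + 1 then w (i + 1) else if i + 1 = k + 1 then ζ else w i)) = B := by
        refine Finset.prod_congr rfl fun i hi => ?_
        have hi' := Finset.mem_Ico.mp hi
        rw [if_neg (by omega), if_neg (by omega), if_neg (by omega), if_neg (by omega)]
      rw [e1, e2, e3, e4]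
      ring
    have hsplit : (fun ζ : E => (∏ i ∈ Finset.range (n + 1), p (s (i + 1) - s i)
          (if i < k + 1 then w i else if i = k + 1 then ζ else w (i - 1))
          (if i + 1 < k + 1 then w (i + 1) else if i + 1 = k + 1 then ζ else w i)) / p t x y)
        = fun ζ : E => (A * B / p t x y) *
          (p (s (k + 1) - s k) (w k) ζ * p (s (k + 2) - s (k + 1)) ζ (w (k + 1))) := by
      funext ζ
      rw [key ζ]
      ring
    rw [hsplit, integral_const_mul,
      ← hCK (s (k + 2) - s (k + 1)) (s (k + 1) - s k) hsk htk (w k) (w (k + 1))]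
    have hrhs : (∏ i ∈ Finset.range n,
        p ((if i + 1 < k + 1 then s (i + 1) else s (i + 2))
            - (if i < k + 1 then s i else s (i + 1))) (w i) (w (i + 1)))
        = A * p (s (k + 2) - s k) (w k) (w (k + 1)) * B := by
      rw [Finset.range_eq_Ico,
        ← Finset.prod_Ico_consecutive _ (Nat.zero_le (k + 1)) (show k + 1 ≤ n by omega),
        ← Finset.range_eq_Ico, Finset.prod_range_succ]
      have e1 : (∏ i ∈ Finset.range k,
          p ((if i + 1 < k + 1 then s (i + 1) else s (i + 2))
              - (if i < k + 1 then s i else s (i + 1))) (w i) (w (i + 1))) = A := by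
        refine Finset.prod_congr rfl fun i hi => ?_
        have hi' := Finset.mem_range.mp hi
        rw [if_pos (by omega), if_pos (by omega)]
      have e2 : p ((if k + 1 < k + 1 then s (k + 1) else s (k + 2))
            - (if k < k + 1 then s k else s (k + 1))) (w k) (w (k + 1))
          = p (s (k + 2) - s k) (w k) (w (k + 1)) := by
        rw [if_neg (by omega), if_pos (by omega)]
      have e3 : (∏ i ∈ Finset.Ico (k + 1) n,
          p ((if i + 1 < k + 1 then s (i + 1) else s (i + 2))
              - (if i < k + 1 then s i else s (i + 1))) (w i) (w (i + 1))) = B := by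
        rw [hB, Finset.prod_Ico_eq_prod_range, Finset.prod_Ico_eq_prod_range,
          show n + 1 - (k + 2) = n - (k + 1) from by omega]
        refine Finset.prod_congr rfl fun i hi => ?_
        rw [if_neg (by omega), if_neg (by omega),
          show k + 2 + i - 1 = k + 1 + i from by omega,
          show k + 2 + i = k + 1 + i + 1 from by omega]
      rw [e1, e2, e3]
    rw [hrhs, show s (k + 1) - s k + (s (k + 2) - s (k + 1)) = s (k + 2) - s k from by ring]
    ring
end
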